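/- Write u = x + iy on ℂ× and let ∂ = (1/2)·(∂/∂x − i·∂/∂y) denote the Wirtinger derivative. For every ν ∈ ℂ and p ∈ ℤ, the function 𝒥_{ν,p} is smooth on ℂ× and satisfies (u·∂)(u·∂)𝒥_{ν,p}(u) + u²·𝒥_{ν,p}(u) = (ν−p)²·𝒥_{ν,p}(u) for all u ∈ ℂ×; in other words, 𝒥_{ν,p} is an eigenfunction of the Bessel operator (u∂_u)² + u² with eigenvalue (ν−p)². -/

import Mathlib

open MeasureTheory Complex Set Filter

noncomputable section

/-- The entire function `J*_ν(z) = ∑_k (-1)^k (z/2)^{2k} / (k! Γ(ν+k+1))`,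
equal to `J_ν(z) (z/2)^{-ν}` for `z > 0`. -/
def Jstar (ν : ℂ) (z : ℂ) : ℂ :=
  ∑' k : ℕ, (-1 : ℂ) ^ k * (z / 2) ^ (2 * k) / ((k.factorial : ℂ) * Complex.Gamma (ν + k + 1))

/-- The Bessel kernel `𝒥_{ν,p}(u) = |u/2|^{2ν} (u/|u|)^{-2p} J*_{ν-p}(u) J*_{ν+p}(conj u)`. -/
def calJ (ν : ℂ) (p : ℤ) (u : ℂ) : ℂ :=
  ((‖u / 2‖ : ℝ) : ℂ) ^ (2 * ν) * (u / ((‖u‖ : ℝ) : ℂ)) ^ (-2 * p) *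
    Jstar (ν - (p : ℂ)) u * Jstar (ν + (p : ℂ)) ((starRingEnd ℂ) u)

/-- The kernel `𝒦_{ν,p}(u) = (𝒥_{-ν,-p}(u) - 𝒥_{ν,p}(u)) / sin(πν)` for `ν ∉ ℤ`,
extended to integer values of `ν` by continuity in `ν`. -/
def calK (ν : ℂ) (p : ℤ) (u : ℂ) : ℂ :=
  limUnder (nhdsWithin ν {z : ℂ | ∀ n : ℤ, z ≠ (n : ℂ)})
    fun z => (calJ (-z) (-p) u - calJ z p u) / Complex.sin ((Real.pi : ℂ) * z)

/-- The multiplicative Haar-type measure `d×u = |u|⁻² d₊u` on `ℂ`. -/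
def mulHaar : Measure ℂ :=
  volume.withDensity fun u => ENNReal.ofReal (‖u‖ ^ (-2 : ℝ))

/-- The transform `𝐊f(ν,p) = ∫_{ℂ×} 𝒦_{ν,p}(u) f(u) d×u`. -/
def Ktrans (f : ℂ → ℂ) (ν : ℂ) (p : ℤ) : ℂ :=
  ∫ u : ℂ, calK ν p u * f u ∂mulHaar

/-- The Wirtinger derivative `∂F = (1/2)(∂F/∂x - i ∂F/∂y)`. -/
def wirt (F : ℂ → ℂ) (u : ℂ) : ℂ :=
  (1 / 2 : ℂ) * (fderiv ℝ F u 1 - Complex.I * fderiv ℝ F u Complex.I)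

namespace Stmt15Aux

def ac (μ : ℂ) (k : ℕ) : ℂ :=
  (-1) ^ k / ((k.factorial : ℂ) * Complex.Gamma (μ + k + 1))

lemma ac_succ (μ : ℂ) (k : ℕ) :
    ac μ (k + 1) = (-1) ^ (k + 1) / ((((k : ℂ) + 1) * (k.factorial : ℂ)) *
      Complex.Gamma (μ + (k : ℂ) + 1 + 1)) := by
  unfold ac
  push_cast [Nat.factorial_succ]
  ring_nf

lemma ac_rec (μ : ℂ) (k : ℕ) :
    ((k : ℂ) + 1) * (μ + k + 1) * ac μ (k + 1) = - ac μ k := by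
  rw [ac_succ]
  by_cases hG : Complex.Gamma (μ + k + 1) = 0
  · have hk0 : ac μ k = 0 := by simp [ac, hG]
    obtain ⟨m, hm⟩ := (Complex.Gamma_eq_zero_iff _).1 hG
    rcases Nat.eq_zero_or_pos m with h0 | hpos
    · subst h0
      have h1 : μ + (k : ℂ) + 1 = 0 := by simpa using hm
      rw [hk0, h1]; ring
    · have hG2 : Complex.Gamma (μ + (k : ℂ) + 1 + 1) = 0 := by
        rw [hm]
        have h2 : (-(m : ℂ)) + 1 = -((m - 1 : ℕ) : ℂ) := by
          have : ((m - 1 : ℕ) : ℂ) = (m : ℂ) - 1 := by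
            push_cast [Nat.cast_sub hpos]; ring
          rw [this]; ring
        rw [h2]; exact (Complex.Gamma_eq_zero_iff _).2 ⟨m - 1, rfl⟩
      simp [hG2, hk0]
  · have hne : μ + (k : ℂ) + 1 ≠ 0 := by
      intro h; exact hG (by rw [h]; exact Complex.Gamma_zero)
    have hstep : Complex.Gamma (μ + (k : ℂ) + 1 + 1)
        = (μ + k + 1) * Complex.Gamma (μ + k + 1) := Complex.Gamma_add_one _ hne
    have hkfac : ((k.factorial : ℂ)) ≠ 0 := Nat.cast_ne_zero.2 k.factorial_ne_zero
    have hk1 : ((k : ℂ) + 1) ≠ 0 := Nat.cast_add_one_ne_zero k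
    simp only [ac, hstep, pow_succ]
    field_simp

lemma norm_ac (μ : ℂ) (k : ℕ) :
    ‖ac μ k‖ = ((k : ℝ) + 1) * ‖μ + k + 1‖ * ‖ac μ (k + 1)‖ := by
  have h := ac_rec μ k
  have : ‖ac μ k‖ = ‖((k : ℂ) + 1) * (μ + k + 1) * ac μ (k + 1)‖ := by rw [h, norm_neg]
  rw [this, norm_mul, norm_mul]
  congr 2
  have : ((k : ℂ) + 1) = ((k + 1 : ℕ) : ℂ) := by push_cast; ring
  rw [this, Complex.norm_natCast]
  push_cast; ring

lemma summable_ac (μ : ℂ) (j : ℕ) {R : ℝ} (hR : 0 ≤ R) :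
    Summable (fun k : ℕ => ((k : ℝ) + 1) ^ j * ‖ac μ k‖ * R ^ k) := by
  apply summable_of_ratio_norm_eventually_le (r := 1/2) (by norm_num)
  have hev : ∀ᶠ k : ℕ in atTop, ‖μ‖ + 2 ^ (j + 1) * R + 1 ≤ (k : ℝ) := by
    filter_upwards [eventually_ge_atTop ⌈‖μ‖ + 2 ^ (j + 1) * R + 1⌉₊] with k hk
    calc ‖μ‖ + 2 ^ (j + 1) * R + 1 ≤ (⌈‖μ‖ + 2 ^ (j + 1) * R + 1⌉₊ : ℝ) := Nat.le_ceil _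
    _ ≤ (k : ℝ) := by exact_mod_cast hk
  filter_upwards [hev] with k hk
  set N : ℝ := ‖μ + k + 1‖ with hN
  set c : ℝ := ‖ac μ (k + 1)‖ with hc
  have hc0 : 0 ≤ c := norm_nonneg _
  have hN0 : 0 ≤ N := norm_nonneg _
  have hNlb : (k : ℝ) + 1 - ‖μ‖ ≤ N := by
    have h1 : ‖((k : ℂ) + 1)‖ ≤ ‖μ + ((k : ℂ) + 1)‖ + ‖μ‖ := by
      calc ‖((k : ℂ) + 1)‖ = ‖(μ + ((k : ℂ) + 1)) + (-μ)‖ := by ring_nf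
      _ ≤ ‖μ + ((k : ℂ) + 1)‖ + ‖-μ‖ := norm_add_le _ _
      _ = ‖μ + ((k : ℂ) + 1)‖ + ‖μ‖ := by rw [norm_neg]
    have h2 : ‖((k : ℂ) + 1)‖ = (k : ℝ) + 1 := by
      have : ((k : ℂ) + 1) = ((k + 1 : ℕ) : ℂ) := by push_cast; ring
      rw [this, Complex.norm_natCast]; push_cast; ring
    have h3 : μ + ((k : ℂ) + 1) = μ + (k : ℂ) + 1 := by ring
    rw [h2, h3] at h1
    linarith
  have hNbig : 2 ^ (j + 1) * R + 2 ≤ N := by linarith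
  have h2j : (0 : ℝ) < 2 ^ j := by positivity
  have hkey : ((k : ℝ) + 2) ^ j * R ≤ 1 / 2 * (((k : ℝ) + 1) ^ j * (((k : ℝ) + 1) * N)) := by
    have h1 : ((k : ℝ) + 2) ^ j ≤ (2 * ((k : ℝ) + 1)) ^ j := by
      apply pow_le_pow_left₀ (by positivity)
      have : (0:ℝ) ≤ k := Nat.cast_nonneg k
      linarith
    have h2 : (2 : ℝ) ^ j * R ≤ 1 / 2 * (((k : ℝ) + 1) * N) := by
      have hk1 : (1 : ℝ) ≤ (k : ℝ) + 1 := by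
        have : (0:ℝ) ≤ k := Nat.cast_nonneg k
        linarith
      have h4 : N ≤ ((k : ℝ) + 1) * N := by nlinarith
      have h5 : 2 ^ (j + 1) * R = 2 * (2 ^ j * R) := by rw [pow_succ]; ring
      nlinarith
    calc ((k : ℝ) + 2) ^ j * R ≤ (2 * ((k : ℝ) + 1)) ^ j * R := by
          apply mul_le_mul_of_nonneg_right h1 hR
    _ = ((k : ℝ) + 1) ^ j * (2 ^ j * R) := by rw [mul_pow]; ring
    _ ≤ ((k : ℝ) + 1) ^ j * (1 / 2 * (((k : ℝ) + 1) * N)) := by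
          apply mul_le_mul_of_nonneg_left h2 (by positivity)
    _ = 1 / 2 * (((k : ℝ) + 1) ^ j * (((k : ℝ) + 1) * N)) := by ring
  have hterm : ∀ m : ℕ, ‖((m : ℝ) + 1) ^ j * ‖ac μ m‖ * R ^ m‖
      = ((m : ℝ) + 1) ^ j * ‖ac μ m‖ * R ^ m := by
    intro m
    rw [Real.norm_eq_abs, _root_.abs_of_nonneg (by positivity)]
  rw [hterm, hterm]
  push_cast
  calc ((k : ℝ) + 1 + 1) ^ j * ‖ac μ (k + 1)‖ * R ^ (k + 1)
      = (((k : ℝ) + 2) ^ j * R) * (c * R ^ k) := by rw [hc]; ring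
  _ ≤ (1 / 2 * (((k : ℝ) + 1) ^ j * (((k : ℝ) + 1) * N))) * (c * R ^ k) := by
        apply mul_le_mul_of_nonneg_right hkey (by positivity)
  _ = 1 / 2 * (((k : ℝ) + 1) ^ j * (((k : ℝ) + 1) * N * c) * R ^ k) := by ring
  _ = 1 / 2 * (((k : ℝ) + 1) ^ j * ‖ac μ k‖ * R ^ k) := by rw [← norm_ac]

def F0 (μ : ℂ) (w : ℂ) : ℂ := ∑' k : ℕ, ac μ k * w ^ k
def F1 (μ : ℂ) (w : ℂ) : ℂ := ∑' k : ℕ, ac μ k * ((k : ℂ) * w ^ (k - 1))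
def F2 (μ : ℂ) (w : ℂ) : ℂ :=
  ∑' k : ℕ, ac μ k * ((k : ℂ) * (((k - 1 : ℕ) : ℂ) * w ^ (k - 2)))

lemma bound0 (μ : ℂ) (k : ℕ) {R : ℝ} (hR : 1 ≤ R) {y : ℂ} (hy : ‖y‖ ≤ R) :
    ‖ac μ k * y ^ k‖ ≤ ((k : ℝ) + 1) ^ 0 * ‖ac μ k‖ * R ^ k := by
  rw [norm_mul, norm_pow, pow_zero, one_mul]
  apply mul_le_mul_of_nonneg_left _ (norm_nonneg _)
  exact pow_le_pow_left₀ (norm_nonneg _) hy k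

lemma pow_sub_le {R : ℝ} (hR : 1 ≤ R) {y : ℂ} (hy : ‖y‖ ≤ R) (k m : ℕ) :
    ‖y‖ ^ (k - m) ≤ R ^ k :=
  le_trans (pow_le_pow_left₀ (norm_nonneg _) hy _)
    (pow_le_pow_right₀ hR (Nat.sub_le k m))

lemma bound1 (μ : ℂ) (k : ℕ) {R : ℝ} (hR : 1 ≤ R) {y : ℂ} (hy : ‖y‖ ≤ R) :
    ‖ac μ k * ((k : ℂ) * y ^ (k - 1))‖ ≤ ((k : ℝ) + 1) ^ 1 * ‖ac μ k‖ * R ^ k := by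
  rw [norm_mul, norm_mul, norm_pow, Complex.norm_natCast, pow_one]
  have h1 : (k : ℝ) * ‖y‖ ^ (k - 1) ≤ ((k : ℝ) + 1) * R ^ k := by
    apply mul_le_mul (by linarith) (pow_sub_le hR hy k 1) (by positivity) (by positivity)
  calc ‖ac μ k‖ * ((k : ℝ) * ‖y‖ ^ (k - 1))
      ≤ ‖ac μ k‖ * (((k : ℝ) + 1) * R ^ k) :=
        mul_le_mul_of_nonneg_left h1 (norm_nonneg _)
  _ = ((k : ℝ) + 1) * ‖ac μ k‖ * R ^ k := by ring

lemma bound2 (μ : ℂ) (k : ℕ) {R : ℝ} (hR : 1 ≤ R) {y : ℂ} (hy : ‖y‖ ≤ R) :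
    ‖ac μ k * ((k : ℂ) * (((k - 1 : ℕ) : ℂ) * y ^ (k - 2)))‖
      ≤ ((k : ℝ) + 1) ^ 2 * ‖ac μ k‖ * R ^ k := by
  rw [norm_mul, norm_mul, norm_mul, norm_pow, Complex.norm_natCast, Complex.norm_natCast]
  have hm : ((k - 1 : ℕ) : ℝ) ≤ (k : ℝ) + 1 := by
    have := Nat.sub_le k 1
    have : ((k - 1 : ℕ) : ℝ) ≤ (k : ℝ) := by exact_mod_cast this
    linarith
  have h1 : (k : ℝ) * (((k - 1 : ℕ) : ℝ) * ‖y‖ ^ (k - 2)) ≤ ((k : ℝ) + 1) ^ 2 * R ^ k := by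
    have h2 : ((k - 1 : ℕ) : ℝ) * ‖y‖ ^ (k - 2) ≤ ((k : ℝ) + 1) * R ^ k :=
      mul_le_mul hm (pow_sub_le hR hy k 2) (by positivity) (by positivity)
    calc (k : ℝ) * (((k - 1 : ℕ) : ℝ) * ‖y‖ ^ (k - 2))
        ≤ ((k : ℝ) + 1) * (((k : ℝ) + 1) * R ^ k) :=
          mul_le_mul (by linarith) h2 (by positivity) (by positivity)
    _ = ((k : ℝ) + 1) ^ 2 * R ^ k := by ring
  calc ‖ac μ k‖ * ((k : ℝ) * (((k - 1 : ℕ) : ℝ) * ‖y‖ ^ (k - 2)))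
      ≤ ‖ac μ k‖ * (((k : ℝ) + 1) ^ 2 * R ^ k) := mul_le_mul_of_nonneg_left h1 (norm_nonneg _)
  _ = ((k : ℝ) + 1) ^ 2 * ‖ac μ k‖ * R ^ k := by ring

lemma hasDerivAt_F0 (μ : ℂ) (w : ℂ) : HasDerivAt (F0 μ) (F1 μ w) w := by
  have hR1 : (1 : ℝ) ≤ ‖w‖ + 1 := by linarith [norm_nonneg w]
  have hR0 : (0 : ℝ) ≤ ‖w‖ + 1 := by positivity
  exact hasDerivAt_tsum_of_isPreconnected (y₀ := (0:ℂ)) (summable_ac μ 1 hR0)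
    Metric.isOpen_ball (convex_ball (0:ℂ) (‖w‖+1)).isPreconnected
    (fun k y _ => (hasDerivAt_pow k y).const_mul (ac μ k))
    (fun k y hy => by
      have : ‖y‖ ≤ ‖w‖ + 1 := by
        rw [Metric.mem_ball, dist_zero_right] at hy; linarith
      exact bound1 μ k hR1 this)
    (by rw [Metric.mem_ball, dist_zero_right, norm_zero]; positivity)
    (by
      apply summable_of_ne_finset_zero (s := {0})
      intro k hk
      simp [zero_pow (by simpa using hk : k ≠ 0)])
    (by rw [Metric.mem_ball, dist_zero_right]; linarith)

lemma hasDerivAt_F1 (μ : ℂ) (w : ℂ) : HasDerivAt (F1 μ) (F2 μ w) w := by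
  have hR1 : (1 : ℝ) ≤ ‖w‖ + 1 := by linarith [norm_nonneg w]
  have hR0 : (0 : ℝ) ≤ ‖w‖ + 1 := by positivity
  exact hasDerivAt_tsum_of_isPreconnected (y₀ := (0:ℂ)) (summable_ac μ 2 hR0)
    Metric.isOpen_ball (convex_ball (0:ℂ) (‖w‖+1)).isPreconnected
    (fun k y _ => by
      have h := (hasDerivAt_pow (k - 1) y).const_mul (ac μ k * (k : ℂ))
      have e1 : (fun z => ac μ k * (k : ℂ) * z ^ (k - 1))
          = fun z => ac μ k * ((k : ℂ) * z ^ (k - 1)) := by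
        funext z; ring
      have e2 : ac μ k * (k : ℂ) * (((k - 1 : ℕ) : ℂ) * y ^ (k - 1 - 1))
          = ac μ k * ((k : ℂ) * (((k - 1 : ℕ) : ℂ) * y ^ (k - 2))) := by
        rw [Nat.sub_sub]; ring
      rw [e1, e2] at h
      exact h)
    (fun k y hy => by
      have : ‖y‖ ≤ ‖w‖ + 1 := by
        rw [Metric.mem_ball, dist_zero_right] at hy; linarith
      exact bound2 μ k hR1 this)
    (by rw [Metric.mem_ball, dist_zero_right, norm_zero]; positivity)
    (by
      apply summable_of_ne_finset_zero (s := {0, 1})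
      intro k hk
      simp only [Finset.mem_insert, Finset.mem_singleton] at hk
      push_neg at hk
      have : k - 1 ≠ 0 := by omega
      simp [zero_pow this])
    (by rw [Metric.mem_ball, dist_zero_right]; linarith)

lemma summable0 (μ : ℂ) (w : ℂ) : Summable (fun k : ℕ => ac μ k * w ^ k) := by
  apply Summable.of_norm
  apply Summable.of_nonneg_of_le (fun k => norm_nonneg _)
    (fun k => by simpa using bound0 μ k (R := ‖w‖ + 1) (by linarith [norm_nonneg w]) (by linarith))
  simpa using summable_ac μ 0 (R := ‖w‖ + 1) (by positivity)

lemma summable1 (μ : ℂ) (w : ℂ) :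
    Summable (fun k : ℕ => ac μ k * ((k : ℂ) * w ^ (k - 1))) := by
  apply Summable.of_norm
  apply Summable.of_nonneg_of_le (fun k => norm_nonneg _)
    (fun k => bound1 μ k (R := ‖w‖ + 1) (by linarith [norm_nonneg w]) (by linarith))
  exact summable_ac μ 1 (by positivity)

lemma summable2 (μ : ℂ) (w : ℂ) :
    Summable (fun k : ℕ => ac μ k * ((k : ℂ) * (((k - 1 : ℕ) : ℂ) * w ^ (k - 2)))) := by
  apply Summable.of_norm
  apply Summable.of_nonneg_of_le (fun k => norm_nonneg _)
    (fun k => bound2 μ k (R := ‖w‖ + 1) (by linarith [norm_nonneg w]) (by linarith))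
  exact summable_ac μ 2 (by positivity)

lemma F_ode (μ : ℂ) (w : ℂ) : w * F2 μ w + (μ + 1) * F1 μ w + F0 μ w = 0 := by
  have s0 := summable0 μ w
  have s1 := summable1 μ w
  have s2 := summable2 μ w
  have key : ∀ k : ℕ, w * (ac μ k * ((k : ℂ) * (((k - 1 : ℕ) : ℂ) * w ^ (k - 2))))
      + (μ + 1) * (ac μ k * ((k : ℂ) * w ^ (k - 1)))
      = ac μ k * ((k : ℂ) * ((μ + k) * w ^ (k - 1))) := by
    intro k
    match k with
    | 0 => simp
    | 1 => simp; ring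
    | (n + 2) =>
      have h1 : (n + 2) - 1 = n + 1 := rfl
      have h2 : (n + 2) - 2 = n := rfl
      rw [h1, h2]
      push_cast
      ring
  -- q k := ac μ k * (k * ((μ + k) * w^(k-1)))
  have sq : Summable (fun k : ℕ => ac μ k * ((k : ℂ) * ((μ + k) * w ^ (k - 1)))) := by
    have := (s2.mul_left w).add (s1.mul_left (μ + 1))
    simpa only [key] using this
  have hsplit : w * F2 μ w + (μ + 1) * F1 μ w
      = ∑' k : ℕ, ac μ k * ((k : ℂ) * ((μ + k) * w ^ (k - 1))) := by
    rw [F2, F1, ← tsum_mul_left, ← tsum_mul_left, ← Summable.tsum_add (s2.mul_left w) (s1.mul_left (μ+1))]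
    exact tsum_congr key
  have hshift : ∑' k : ℕ, ac μ k * ((k : ℂ) * ((μ + k) * w ^ (k - 1))) = - F0 μ w := by
    rw [Summable.tsum_eq_zero_add sq]
    simp only [Nat.cast_zero, zero_mul, mul_zero, zero_add]
    have : ∀ k : ℕ, ac μ (k + 1) * (((k + 1 : ℕ) : ℂ) * ((μ + ((k + 1 : ℕ) : ℂ)) * w ^ ((k + 1) - 1)))
        = - (ac μ k * w ^ k) := by
      intro k
      have h := ac_rec μ k
      have h1 : (k + 1) - 1 = k := rfl
      rw [h1]
      push_cast
      calc ac μ (k + 1) * (((k : ℂ) + 1) * ((μ + ((k : ℂ) + 1)) * w ^ k))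
          = (((k : ℂ) + 1) * (μ + (k : ℂ) + 1) * ac μ (k + 1)) * w ^ k := by ring
      _ = - (ac μ k * w ^ k) := by rw [h]; ring
    rw [tsum_congr this, tsum_neg]
    rfl
  rw [hsplit, hshift]
  ring

lemma Jstar_eq (μ : ℂ) (z : ℂ) : Jstar μ z = F0 μ (z ^ 2 / 4) := by
  unfold Jstar F0
  apply tsum_congr
  intro k
  rw [ac, pow_mul]
  have h : (z / 2) ^ 2 = z ^ 2 / 4 := by ring
  rw [h]
  ring

def J1 (μ : ℂ) (z : ℂ) : ℂ := F1 μ (z ^ 2 / 4) * (z / 2)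
def J2 (μ : ℂ) (z : ℂ) : ℂ :=
  F2 μ (z ^ 2 / 4) * (z / 2) ^ 2 + F1 μ (z ^ 2 / 4) * (1 / 2)

lemma hasDerivAt_inner (z : ℂ) : HasDerivAt (fun z : ℂ => z ^ 2 / 4) (z / 2) z := by
  have h : HasDerivAt (fun z : ℂ => z ^ 2 / 4) _ z := (hasDerivAt_pow 2 z).div_const 4
  convert h using 1
  push_cast
  ring

lemma hasDerivAt_Jstar (μ : ℂ) (z : ℂ) : HasDerivAt (Jstar μ) (J1 μ z) z := by
  have h := (hasDerivAt_F0 μ (z ^ 2 / 4)).comp z (hasDerivAt_inner z)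
  have e : Jstar μ = fun z => F0 μ (z ^ 2 / 4) := funext fun z => Jstar_eq μ z
  rw [e]
  exact h

lemma hasDerivAt_J1 (μ : ℂ) (z : ℂ) : HasDerivAt (J1 μ) (J2 μ z) z := by
  have h1 := (hasDerivAt_F1 μ (z ^ 2 / 4)).comp z (hasDerivAt_inner z)
  have h2 : HasDerivAt (J1 μ) _ z := h1.mul ((hasDerivAt_id z).div_const 2)
  convert h2 using 1
  unfold J2
  simp only [Function.comp_apply, id_eq]
  ring

lemma Jstar_ode (μ : ℂ) (z : ℂ) :
    z * J2 μ z + (2 * μ + 1) * J1 μ z + z * Jstar μ z = 0 := by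
  have h := F_ode μ (z ^ 2 / 4)
  rw [Jstar_eq]
  unfold J1 J2
  linear_combination z * h

lemma differentiable_Jstar (μ : ℂ) : Differentiable ℂ (Jstar μ) :=
  fun z => (hasDerivAt_Jstar μ z).differentiableAt

lemma wirt_congr {f g : ℂ → ℂ} {u : ℂ} (h : f =ᶠ[nhds u] g) : wirt f u = wirt g u := by
  unfold wirt
  rw [h.fderiv_eq]

lemma wirt_mul_conj {A B : ℂ → ℂ} {A' : ℂ} {u : ℂ} (hA : HasDerivAt A A' u)
    (hB : DifferentiableAt ℂ B ((starRingEnd ℂ) u)) :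
    wirt (fun w => A w * B ((starRingEnd ℂ) w)) u = A' * B ((starRingEnd ℂ) u) := by
  set B' : ℂ := deriv B ((starRingEnd ℂ) u) with hB'
  have hBd : HasDerivAt B B' ((starRingEnd ℂ) u) := hB.hasDerivAt
  have hconj : HasFDerivAt (fun w : ℂ => (starRingEnd ℂ) w)
      (Complex.conjCLE.toContinuousLinearMap) u :=
    Complex.conjCLE.toContinuousLinearMap.hasFDerivAt
  have h2 : HasFDerivAt (fun w => B ((starRingEnd ℂ) w))
      (((ContinuousLinearMap.smulRight (1 : ℂ →L[ℂ] ℂ) B').restrictScalars ℝ).comp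
        Complex.conjCLE.toContinuousLinearMap) u :=
    (hBd.hasFDerivAt.restrictScalars ℝ).comp u hconj
  have h1 : HasFDerivAt A ((ContinuousLinearMap.smulRight (1 : ℂ →L[ℂ] ℂ) A').restrictScalars ℝ) u :=
    hA.hasFDerivAt.restrictScalars ℝ
  have hf := h1.mul h2
  unfold wirt
  have hf' : HasFDerivAt (fun w => A w * B ((starRingEnd ℂ) w)) _ u := hf
  rw [hf'.fderiv]
  simp only [ContinuousLinearMap.add_apply, ContinuousLinearMap.smul_apply,
    ContinuousLinearMap.coe_comp', Function.comp_apply,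
    ContinuousLinearMap.coe_restrictScalars', ContinuousLinearMap.smulRight_apply,
    ContinuousLinearMap.one_apply, ContinuousLinearEquiv.coe_coe, Complex.conjCLE_apply,
    smul_eq_mul, map_one, Complex.conj_I]
  ring_nf
  simp only [Complex.I_sq]
  ring

/-- Branch of logarithm adapted to the base point `u₀`. -/
def Lf (u₀ : ℂ) : ℂ → ℂ := fun z => Complex.log (z / u₀) + Complex.log u₀

def Sset (u₀ : ℂ) : Set ℂ := {z : ℂ | z ≠ 0} ∩ (fun z => z / u₀) ⁻¹' Complex.slitPlane

def Cf (ν : ℂ) : ℂ := Complex.exp (-(2 * ν) * (Real.log 2 : ℂ))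

def Af (ν : ℂ) (p : ℤ) (u₀ : ℂ) : ℂ → ℂ := fun z =>
  Cf ν * (Complex.exp ((ν - (p : ℂ)) * Lf u₀ z) * Jstar (ν - (p : ℂ)) z)

def Ψf (ν : ℂ) (p : ℤ) (u₀ : ℂ) : ℂ → ℂ := fun w =>
  Complex.exp ((ν + (p : ℂ)) *
    (Complex.log (w / (starRingEnd ℂ) u₀) + (starRingEnd ℂ) (Complex.log u₀))) *
    Jstar (ν + (p : ℂ)) w

def Φ₁f (ν : ℂ) (p : ℤ) (u₀ : ℂ) : ℂ → ℂ := fun z =>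
  Cf ν * (Complex.exp ((ν - (p : ℂ)) * Lf u₀ z) *
    ((ν - (p : ℂ)) * z⁻¹ * Jstar (ν - (p : ℂ)) z + J1 (ν - (p : ℂ)) z))

section core
variable (ν : ℂ) (p : ℤ) {u₀ : ℂ}

lemma Sopen : IsOpen (Sset u₀) :=
  isOpen_ne.inter (Complex.isOpen_slitPlane.preimage (continuous_id.div_const u₀))

lemma mem_S (hu₀ : u₀ ≠ 0) : u₀ ∈ Sset u₀ := by
  refine ⟨hu₀, ?_⟩
  simp only [Set.mem_preimage, div_self hu₀]
  exact Complex.one_mem_slitPlane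

lemma exp_Lf (hu₀ : u₀ ≠ 0) {z : ℂ} (hz : z ∈ Sset u₀) : Complex.exp (Lf u₀ z) = z := by
  unfold Lf
  rw [Complex.exp_add, Complex.exp_log (div_ne_zero hz.1 hu₀), Complex.exp_log hu₀]
  exact div_mul_cancel₀ z hu₀

lemma hasDerivAt_Lf (hu₀ : u₀ ≠ 0) {z : ℂ} (hz : z ∈ Sset u₀) :
    HasDerivAt (Lf u₀) z⁻¹ z := by
  have h1 : HasDerivAt (fun z : ℂ => z / u₀) (1 / u₀) z := (hasDerivAt_id z).div_const u₀
  have h2 := ((Complex.hasDerivAt_log hz.2).comp z h1).add_const (Complex.log u₀)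
  have h3 : HasDerivAt (Lf u₀) _ z := h2
  convert h3 using 1
  field_simp

lemma fac (hu₀ : u₀ ≠ 0) {z : ℂ} (hz : z ∈ Sset u₀) :
    calJ ν p z = Af ν p u₀ z * Ψf ν p u₀ ((starRingEnd ℂ) z) := by
  have hz0 : z ≠ 0 := hz.1
  have hsp : z / u₀ ∈ Complex.slitPlane := hz.2
  have hLz : Complex.exp (Lf u₀ z) = z := exp_Lf hu₀ hz
  have hconjlog : Complex.log ((starRingEnd ℂ) z / (starRingEnd ℂ) u₀)
      = (starRingEnd ℂ) (Complex.log (z / u₀)) := by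
    rw [← map_div₀]
    exact Complex.log_conj _ (Complex.slitPlane_arg_ne_pi hsp)
  have hΨval : Ψf ν p u₀ ((starRingEnd ℂ) z)
      = Complex.exp ((ν + (p : ℂ)) * (starRingEnd ℂ) (Lf u₀ z))
        * Jstar (ν + (p : ℂ)) ((starRingEnd ℂ) z) := by
    unfold Ψf Lf
    rw [hconjlog, map_add]
  have habs : (‖z‖ : ℝ) = Real.exp ((Lf u₀ z).re) := by
    conv_lhs => rw [← hLz]
    rw [Complex.norm_exp]
  have hkey : ((‖z / 2‖ : ℝ) : ℂ) ^ (2 * ν) * (z / ((‖z‖ : ℝ) : ℂ)) ^ (-2 * p)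
      = Cf ν * Complex.exp ((ν - (p : ℂ)) * Lf u₀ z)
        * Complex.exp ((ν + (p : ℂ)) * (starRingEnd ℂ) (Lf u₀ z)) := by
    set l := Lf u₀ z with hl
    have h1 : ‖z / 2‖ = Real.exp l.re / 2 := by
      rw [norm_div, habs]
      norm_num
    have hpos : (0 : ℝ) < Real.exp l.re / 2 := by positivity
    have hterm1 : ((‖z / 2‖ : ℝ) : ℂ) ^ (2 * ν)
        = Complex.exp (((l.re - Real.log 2 : ℝ) : ℂ) * (2 * ν)) := by
      rw [h1, Complex.cpow_def_of_ne_zero (by exact_mod_cast hpos.ne')]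
      congr 1
      rw [← Complex.ofReal_log hpos.le]
      congr 2
      rw [Real.log_div (Real.exp_pos _).ne' (by norm_num), Real.log_exp]
    have hterm2 : (z / ((‖z‖ : ℝ) : ℂ)) ^ (-2 * p)
        = Complex.exp (((-2 * p : ℤ) : ℂ) * (l - (l.re : ℂ))) := by
      have hq : z / ((‖z‖ : ℝ) : ℂ) = Complex.exp (l - (l.re : ℂ)) := by
        rw [Complex.exp_sub, hLz, habs, Complex.ofReal_exp]
      rw [hq, ← Complex.exp_int_mul]
    rw [hterm1, hterm2]
    unfold Cf
    rw [← Complex.exp_add, ← Complex.exp_add, ← Complex.exp_add]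
    congr 1
    have hre : ((l.re : ℝ) : ℂ) = (l + (starRingEnd ℂ) l) / 2 := by
      rw [Complex.add_conj]
      push_cast
      ring
    push_cast
    linear_combination (2 * ν + 2 * (p : ℂ)) * hre
  rw [calJ, hΨval, hkey]
  unfold Af
  ring

lemma conj_ne (hu₀ : u₀ ≠ 0) : (starRingEnd ℂ) u₀ ≠ 0 := by
  intro h; apply hu₀; simpa using congrArg (starRingEnd ℂ) h

lemma Ψdiff_at {w : ℂ} (hmem : w / (starRingEnd ℂ) u₀ ∈ Complex.slitPlane) :
    DifferentiableAt ℂ (Ψf ν p u₀) w := by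
  apply DifferentiableAt.mul
  · apply DifferentiableAt.cexp
    apply DifferentiableAt.const_mul
    exact ((differentiableAt_id.div_const _).clog hmem).add_const _
  · exact (differentiable_Jstar (ν + (p : ℂ))) w

lemma conj_mem {z : ℂ} (hz : z ∈ Sset u₀) :
    (starRingEnd ℂ) z / (starRingEnd ℂ) u₀ ∈ Complex.slitPlane := by
  have he : (starRingEnd ℂ) z / (starRingEnd ℂ) u₀ = (starRingEnd ℂ) (z / u₀) :=
    (map_div₀ _ _ _).symm
  rw [he]
  have h : z / u₀ ∈ Complex.slitPlane := hz.2
  rw [Complex.mem_slitPlane_iff] at h ⊢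
  rcases h with h | h
  · exact Or.inl (by rw [Complex.conj_re]; exact h)
  · exact Or.inr (by rw [Complex.conj_im]; simpa using h)

lemma hasDerivAt_Af (hu₀ : u₀ ≠ 0) {z : ℂ} (hz : z ∈ Sset u₀) :
    HasDerivAt (Af ν p u₀) (Φ₁f ν p u₀ z) z := by
  have hE : HasDerivAt (fun z => Complex.exp ((ν - (p : ℂ)) * Lf u₀ z))
      (Complex.exp ((ν - (p : ℂ)) * Lf u₀ z) * ((ν - (p : ℂ)) * z⁻¹)) z :=
    ((hasDerivAt_Lf hu₀ hz).const_mul (ν - (p : ℂ))).cexp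
  have h := (hE.mul (hasDerivAt_Jstar (ν - (p : ℂ)) z)).const_mul (Cf ν)
  have hfun : (fun y => Cf ν * (Complex.exp ((ν - (p : ℂ)) * Lf u₀ y)
      * Jstar (ν - (p : ℂ)) y)) = Af ν p u₀ := rfl
  replace h : HasDerivAt (Af ν p u₀) _ z := h
  convert h using 1
  unfold Φ₁f
  ring

lemma wirt_inner (hu₀ : u₀ ≠ 0) {z : ℂ} (hz : z ∈ Sset u₀) :
    wirt (calJ ν p) z = Φ₁f ν p u₀ z * Ψf ν p u₀ ((starRingEnd ℂ) z) := by
  have hev : calJ ν p =ᶠ[nhds z] fun w => Af ν p u₀ w * Ψf ν p u₀ ((starRingEnd ℂ) w) :=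
    eventuallyEq_of_mem ((Sopen (u₀ := u₀)).mem_nhds hz) (fun w hw => fac ν p hu₀ hw)
  rw [wirt_congr hev]
  exact wirt_mul_conj (hasDerivAt_Af ν p hu₀ hz) (Ψdiff_at ν p (conj_mem hz))

lemma core (hu₀ : u₀ ≠ 0) :
    AnalyticAt ℝ (calJ ν p) u₀ ∧
    u₀ * wirt (fun w => w * wirt (calJ ν p) w) u₀ + u₀ ^ 2 * calJ ν p u₀ =
      (ν - (p : ℂ)) ^ 2 * calJ ν p u₀ := by
  set μ := ν - (p : ℂ) with hμ
  constructor
  · -- analyticity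
    have hAanal : AnalyticAt ℂ (Af ν p u₀) u₀ := by
      apply DifferentiableOn.analyticAt (s := Sset u₀) _
        ((Sopen (u₀ := u₀)).mem_nhds (mem_S hu₀))
      intro z hz
      exact ((hasDerivAt_Af ν p hu₀ hz).differentiableAt).differentiableWithinAt
    have hΨanal : AnalyticAt ℂ (Ψf ν p u₀) ((starRingEnd ℂ) u₀) := by
      apply DifferentiableOn.analyticAt
        (s := (fun w => w / (starRingEnd ℂ) u₀) ⁻¹' Complex.slitPlane)
      · intro w hw
        exact (Ψdiff_at ν p hw).differentiableWithinAt
      · apply (Complex.isOpen_slitPlane.preimage (continuous_id.div_const _)).mem_nhds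
        simp only [Set.mem_preimage, id_eq, div_self (conj_ne hu₀)]
        exact Complex.one_mem_slitPlane
    have hconjanal : AnalyticAt ℝ (fun z : ℂ => (starRingEnd ℂ) z) u₀ := by
      have h := (Complex.conjCLE.toContinuousLinearMap).analyticAt u₀
      exact h.congr (Filter.Eventually.of_forall fun z => rfl)
    have hcomp : AnalyticAt ℝ (fun z => Ψf ν p u₀ ((starRingEnd ℂ) z)) u₀ :=
      (hΨanal.restrictScalars).comp hconjanal
    refine ((hAanal.restrictScalars).mul hcomp).congr ?_
    exact eventuallyEq_of_mem ((Sopen (u₀ := u₀)).mem_nhds (mem_S hu₀))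
      fun z hz => (fac ν p hu₀ hz).symm
  · -- the differential equation
    have hu₀S : u₀ ∈ Sset u₀ := mem_S hu₀
    have hGder : HasDerivAt (fun z => μ * z⁻¹ * Jstar μ z + J1 μ z)
        (μ * -(u₀ ^ 2)⁻¹ * Jstar μ u₀ + μ * u₀⁻¹ * J1 μ u₀ + J2 μ u₀) u₀ := by
      have h1 : HasDerivAt (fun z : ℂ => μ * z⁻¹) (μ * -(u₀ ^ 2)⁻¹) u₀ :=
        (hasDerivAt_inv hu₀).const_mul μ
      exact (h1.mul (hasDerivAt_Jstar μ u₀)).add (hasDerivAt_J1 μ u₀)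
    have hE : HasDerivAt (fun z => Complex.exp (μ * Lf u₀ z))
        (Complex.exp (μ * Lf u₀ u₀) * (μ * u₀⁻¹)) u₀ :=
      ((hasDerivAt_Lf hu₀ hu₀S).const_mul μ).cexp
    have hΦ₁der : HasDerivAt (Φ₁f ν p u₀)
        (Cf ν * (Complex.exp (μ * Lf u₀ u₀) * (μ * u₀⁻¹)
            * (μ * u₀⁻¹ * Jstar μ u₀ + J1 μ u₀)
          + Complex.exp (μ * Lf u₀ u₀)
            * (μ * -(u₀ ^ 2)⁻¹ * Jstar μ u₀ + μ * u₀⁻¹ * J1 μ u₀ + J2 μ u₀))) u₀ := by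
      have h := (hE.mul hGder).const_mul (Cf ν)
      have hfun : (fun y => Cf ν * (Complex.exp (μ * Lf u₀ y)
          * (μ * y⁻¹ * Jstar μ y + J1 μ y))) = Φ₁f ν p u₀ := rfl
      exact h
    set Φ₂ : ℂ := Cf ν * (Complex.exp (μ * Lf u₀ u₀) * (μ * u₀⁻¹)
        * (μ * u₀⁻¹ * Jstar μ u₀ + J1 μ u₀)
      + Complex.exp (μ * Lf u₀ u₀)
        * (μ * -(u₀ ^ 2)⁻¹ * Jstar μ u₀ + μ * u₀⁻¹ * J1 μ u₀ + J2 μ u₀)) with hΦ₂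
    have hzΦ₁ : HasDerivAt (fun z => z * Φ₁f ν p u₀ z)
        (Φ₁f ν p u₀ u₀ + u₀ * Φ₂) u₀ := by
      have h : HasDerivAt (fun z => z * Φ₁f ν p u₀ z) _ u₀ := (hasDerivAt_id u₀).mul hΦ₁der
      simpa using h
    have hW : (fun w => w * wirt (calJ ν p) w) =ᶠ[nhds u₀]
        fun z => (z * Φ₁f ν p u₀ z) * Ψf ν p u₀ ((starRingEnd ℂ) z) := by
      filter_upwards [(Sopen (u₀ := u₀)).mem_nhds hu₀S] with z hz
      rw [wirt_inner ν p hu₀ hz]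
      ring
    have houter : wirt (fun w => w * wirt (calJ ν p) w) u₀
        = (Φ₁f ν p u₀ u₀ + u₀ * Φ₂) * Ψf ν p u₀ ((starRingEnd ℂ) u₀) := by
      rw [wirt_congr hW]
      exact wirt_mul_conj (A := fun z => z * Φ₁f ν p u₀ z) hzΦ₁
        (Ψdiff_at ν p (conj_mem hu₀S))
    have hODE := Jstar_ode μ u₀
    have hcal := fac ν p hu₀ hu₀S
    rw [houter, hcal, hΦ₂]
    unfold Φ₁f Af
    rw [← hμ]
    have hiu : u₀ * u₀⁻¹ = 1 := mul_inv_cancel₀ hu₀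
    have hiu2 : u₀ ^ 2 * (u₀ ^ 2)⁻¹ = 1 := mul_inv_cancel₀ (pow_ne_zero 2 hu₀)
    set E := Complex.exp (μ * Lf u₀ u₀) with hEdef
    set P := Ψf ν p u₀ ((starRingEnd ℂ) u₀) with hPdef
    set f := Jstar μ u₀ with hfdef
    set f1 := J1 μ u₀ with hf1def
    set f2 := J2 μ u₀ with hf2def
    linear_combination (Cf ν * E * P * u₀) * hODE
      + (Cf ν * E * P * μ * f + Cf ν * E * P * μ ^ 2 * f * (u₀ * u₀⁻¹ + 1)
        + 2 * Cf ν * E * P * μ * u₀ * f1) * hiu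
      + (-(Cf ν * E * P * μ * f)) * hiu2

end core
end Stmt15Aux

theorem stmt15 (ν : ℂ) (p : ℤ) :
    ContDiffOn ℝ (⊤ : ℕ∞) (calJ ν p) {u : ℂ | u ≠ 0} ∧
    ∀ u : ℂ, u ≠ 0 →
      u * wirt (fun w => w * wirt (calJ ν p) w) u + u ^ 2 * calJ ν p u =
        (ν - (p : ℂ)) ^ 2 * calJ ν p u := by
  constructor
  · intro u hu
    exact ((Stmt15Aux.core ν p hu).1.contDiffAt).contDiffWithinAt
  · intro u hu
    exact (Stmt15Aux.core ν p hu).2
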